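/- arXiv:1012.5505 — 2 statements merged into one kernel-verified Lean document; each statement's English description precedes it below -/
import Mathlib

section
/- Let n ≥ 3 and let E ∈ M_n(𝕋) be the matrix all of whose entries equal 0 ∈ ℝ. For every matrix A ∈ M_n(𝕋) that is not diagonal (i.e., has some off-diagonal entry different from −∞), the distance between A and E in the commuting graph Γ(M_n(𝕋)) is at most 2; indeed, if a is the maximum entry of A, then A — (A ⊕ a·I_n) — E is a path in Γ(M_n(𝕋)). -/
/-- The commuting graph of the semiring of `n × n` matrices over `R`: vertices are the
noncentral matrices, and two distinct vertices are adjacent iff they commute. -/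
def commGraph (R : Type*) [Semiring R] (n : ℕ) :
    SimpleGraph {X : Matrix (Fin n) (Fin n) R // ¬ ∀ Y, X * Y = Y * X} where
  Adj X Y := X ≠ Y ∧ X.1 * Y.1 = Y.1 * X.1
  symm := ⟨fun _ _ h => ⟨fun e => h.1 e.symm, h.2.symm⟩⟩
  loopless := ⟨fun _ h => h.1 rfl⟩


/-- The max-plus tropical semiring `ℝ ∪ {-∞}`, realized as the `Tropical` semiring on the
order dual of `WithBot ℝ`. -/
noncomputable instance : LinearOrderedAddCommMonoidWithTop ((WithBot ℝ)ᵒᵈ) :=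
  { (inferInstance : AddCommMonoid ((WithBot ℝ)ᵒᵈ)),
    (inferInstance : LinearOrder ((WithBot ℝ)ᵒᵈ)),
    (inferInstance : IsOrderedAddMonoid ((WithBot ℝ)ᵒᵈ)),
    (inferInstance : OrderTop ((WithBot ℝ)ᵒᵈ)) with
    top_add' := fun a => WithBot.bot_add a
    isAddLeftRegular_of_ne_top := fun _a ha _b _c h =>
      WithBot.add_left_cancel (α := ℝ) ha h }

abbrev Trop : Type := Tropical ((WithBot ℝ)ᵒᵈ)


/-!
Let `a` be the tropical sum (the maximum) of all entries of `A` and `B = A ⊕ a·Iₙ`. Then `B`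
commutes with `A`, being a polynomial in `A`. Every row and every column of `B` has tropical sum
exactly `a`, because adding `a` to a row or column sum of `A` is absorbed by the maximum; and a
matrix all of whose row and column sums equal the same `c` commutes with the all-ones matrix,
both products being the constant matrix `c`. Finally `B` agrees with `A` off the diagonal, so it
keeps a finite off-diagonal entry and is not central.
-/

open Matrix

namespace SimpleGraph

variable {V : Type*} (G : SimpleGraph V) {u v w : V}

theorem edist_le_two_of_adj_or_eq (huv : G.Adj u v ∨ u = v) (hvw : G.Adj v w ∨ v = w) :
    G.edist u w ≤ 2 :=
  calc G.edist u w ≤ G.edist u v + G.edist v w := G.edist_triangle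
    _ ≤ 1 + 1 := add_le_add (G.edist_le_one_iff_adj_or_eq.mpr huv)
        (G.edist_le_one_iff_adj_or_eq.mpr hvw)
    _ = 2 := one_add_one_eq_two

end SimpleGraph

section CommGraph

variable {R : Type*} [Semiring R] {n : ℕ}
  {X Y Z : {X : Matrix (Fin n) (Fin n) R // ¬ ∀ Y, X * Y = Y * X}}

theorem commGraph_adj_or_eq_of_mul_comm (h : X.1 * Y.1 = Y.1 * X.1) :
    (commGraph R n).Adj X Y ∨ X = Y :=
  (em (X = Y)).elim Or.inr fun hXY => Or.inl ⟨hXY, h⟩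

theorem commGraph_edist_le_two_of_mul_comm (hXY : X.1 * Y.1 = Y.1 * X.1)
    (hYZ : Y.1 * Z.1 = Z.1 * Y.1) : (commGraph R n).edist X Z ≤ 2 :=
  (commGraph R n).edist_le_two_of_adj_or_eq (commGraph_adj_or_eq_of_mul_comm hXY)
    (commGraph_adj_or_eq_of_mul_comm hYZ)

end CommGraph

namespace Matrix

variable {m : Type*} [Fintype m]

theorem not_forall_mul_comm_of_ne_zero [DecidableEq m] {R : Type*} [Semiring R]
    {X : Matrix m m R} {i j : m} (hij : i ≠ j) (hX : X i j ≠ 0) : ¬ ∀ Y, X * Y = Y * X := by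
  intro h
  have hij_entry := congrFun (congrFun (h (single j j 1)) i) j
  rw [mul_single_apply_same, mul_one, single_mul_apply_of_ne _ _ _ _ _ hij] at hij_entry
  exact hX hij_entry

variable {R : Type*} [CommSemiring R]

theorem sum_row_add_smul_one [DecidableEq m] (A : Matrix m m R) (c : R) (i : m) :
    ∑ k, (A + c • 1) i k = ∑ k, A i k + c := by
  simp [Finset.sum_add_distrib, one_apply]

theorem sum_col_add_smul_one [DecidableEq m] (A : Matrix m m R) (c : R) (j : m) :
    ∑ k, (A + c • 1) k j = ∑ k, A k j + c := by
  simp [Finset.sum_add_distrib, one_apply]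

theorem mul_comm_of_sum_row_eq_sum_col_eq {B E : Matrix m m R} {c : R}
    (hrow : ∀ i, ∑ k, B i k = c) (hcol : ∀ j, ∑ k, B k j = c) (hE : ∀ i j, E i j = 1) :
    B * E = E * B := by
  ext i j
  simp only [mul_apply, hE, mul_one, one_mul, hrow, hcol]

end Matrix

namespace Tropical

variable {R S : Type*} [LinearOrder R] [OrderTop R]

theorem sum_le_of_mem {s : Finset S} (f : S → Tropical R) {i : S} (hi : i ∈ s) :
    ∑ x ∈ s, f x ≤ f i := by
  rw [← untrop_le_iff, Finset.untrop_sum']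
  exact Finset.inf_le hi

variable {m : Type*} [Fintype m]

theorem sum_entries_le_sum_row (A : Matrix m m (Tropical R)) (i : m) :
    ∑ p, ∑ q, A p q ≤ ∑ q, A i q :=
  sum_le_of_mem _ (Finset.mem_univ i)

theorem sum_entries_le_sum_col (A : Matrix m m (Tropical R)) (j : m) :
    ∑ p, ∑ q, A p q ≤ ∑ p, A p j :=
  Finset.sum_comm.trans_le (sum_le_of_mem (fun q => ∑ p, A p q) (Finset.mem_univ j))

end Tropical

theorem dist_le_two_of_nondiagonal_general (n : ℕ)
    (A E : Matrix (Fin n) (Fin n) Trop) (hEdef : ∀ i j, E i j = 1)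
    (hnd : ∃ i j : Fin n, i ≠ j ∧ A i j ≠ 0)
    (hA : ¬ ∀ Y, A * Y = Y * A) (hE : ¬ ∀ Y, E * Y = Y * E) :
    (commGraph Trop n).edist ⟨A, hA⟩ ⟨E, hE⟩ ≤ 2 ∧
      A * (A + (∑ i, ∑ j, A i j) • (1 : Matrix (Fin n) (Fin n) Trop)) =
        (A + (∑ i, ∑ j, A i j) • (1 : Matrix (Fin n) (Fin n) Trop)) * A ∧
      (A + (∑ i, ∑ j, A i j) • (1 : Matrix (Fin n) (Fin n) Trop)) * E =
        E * (A + (∑ i, ∑ j, A i j) • (1 : Matrix (Fin n) (Fin n) Trop)) := by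
  obtain ⟨i, j, hij, hAij⟩ := hnd
  set a : Trop := ∑ i, ∑ j, A i j
  have hAB : A * (A + a • 1) = (A + a • 1) * A :=
    (Commute.add_right (Commute.refl A) ((Commute.one_right A).smul_right a)).eq
  have hBE : (A + a • 1) * E = E * (A + a • 1) := by
    refine mul_comm_of_sum_row_eq_sum_col_eq (c := a) (fun i => ?_) (fun j => ?_) hEdef
    · rw [sum_row_add_smul_one, Tropical.add_eq_right (Tropical.sum_entries_le_sum_row A i)]
    · rw [sum_col_add_smul_one, Tropical.add_eq_right (Tropical.sum_entries_le_sum_col A j)]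
  have hB : ¬ ∀ Y, (A + a • 1) * Y = Y * (A + a • 1) :=
    not_forall_mul_comm_of_ne_zero hij (by simpa [one_apply_ne hij] using hAij)
  exact ⟨commGraph_edist_le_two_of_mul_comm (Y := ⟨_, hB⟩) hAB hBE, hAB, hBE⟩

/-- For `n ≥ 3` and a nondiagonal matrix `A ∈ M_n(𝕋)`, the distance between `A` and the
all-ones matrix `E` in `Γ(M_n(𝕋))` is at most 2; indeed, with `a` the maximum entry of `A`
(the tropical sum of all entries), the consecutive terms of `A — (A ⊕ a·Iₙ) — E` commute. -/
theorem dist_le_two_of_nondiagonal (n : ℕ) (hn : 3 ≤ n)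
    (A E : Matrix (Fin n) (Fin n) Trop) (hEdef : ∀ i j, E i j = 1)
    (hnd : ∃ i j : Fin n, i ≠ j ∧ A i j ≠ 0)
    (hA : ¬ ∀ Y, A * Y = Y * A) (hE : ¬ ∀ Y, E * Y = Y * E) :
    (commGraph Trop n).edist ⟨A, hA⟩ ⟨E, hE⟩ ≤ 2 ∧
      A * (A + (∑ i, ∑ j, A i j) • (1 : Matrix (Fin n) (Fin n) Trop)) =
        (A + (∑ i, ∑ j, A i j) • (1 : Matrix (Fin n) (Fin n) Trop)) * A ∧
      (A + (∑ i, ∑ j, A i j) • (1 : Matrix (Fin n) (Fin n) Trop)) * E =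
        E * (A + (∑ i, ∑ j, A i j) • (1 : Matrix (Fin n) (Fin n) Trop)) :=
  dist_le_two_of_nondiagonal_general n A E hEdef hnd hA hE
end

section
/- Let n ≥ 3, let D ∈ M_n(𝕋) be a diagonal matrix whose diagonal entries are pairwise distinct, and let A ∈ M_n(𝕋) be any noncentral matrix. Then the distance between D and A in the commuting graph Γ(M_n(𝕋)) is at most 4. -/
/-!
If `A` is diagonal it commutes with `D`. Otherwise `A p q ≠ 0` for some `p ≠ q`. The supports
of the powers `(1 + A) ^ m` grow with `m` and stabilise, so one of these powers `Q` commutes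
with `A` and has transitive support, with `Q p q ≠ 0`. Adding `tr Q • 1` (the trace is the
maximum of the diagonal) gives `B`, which still commutes with `A` and has constant diagonal.
Transitivity through `Q p q` lets every entry of `s * (row q of B)` be dominated by row `p`,
and of `(column p of B) * s` by column `q`, once `s` is close enough to `-∞`; then
`M = 1 + s E_pq` commutes with `B`. The diagonal matrix `C` equal to `1` (the real `0`) at
`p, q` and to `0 = -∞` elsewhere commutes with `D` and `M`, and is noncentral because `n ≥ 3`.
This is the path `D — C — M — B — A`.
-/

namespace Matrix

variable {ι R : Type*} [Fintype ι] [DecidableEq ι]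

lemma commute_one_add_single [Semiring R] (B : Matrix ι ι R) {p q : ι} {s : R}
    (hdiag : s * B q q = B p p * s) (hrow : ∀ j, j ≠ q → B p j + s * B q j = B p j)
    (hcol : ∀ i, i ≠ p → B i q + B i p * s = B i q) :
    Commute (1 + single p q s) B := by
  change (1 + single p q s) * B = B * (1 + single p q s)
  ext i j
  rw [add_mul, mul_add, one_mul, mul_one, add_apply, add_apply]
  by_cases hi : i = p <;> by_cases hj : j = q
  · subst hi hj
    rw [single_mul_apply_same, mul_single_apply_same, hdiag]
  · subst hi
    rw [single_mul_apply_same, mul_single_apply_of_ne _ _ _ _ _ hj, add_zero, hrow j hj]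
  · subst hj
    rw [single_mul_apply_of_ne _ _ _ _ _ hi, mul_single_apply_same, add_zero, hcol i hi]
  · rw [single_mul_apply_of_ne _ _ _ _ _ hi, mul_single_apply_of_ne _ _ _ _ _ hj]

lemma commute_diagonal_single [CommSemiring R] {d : ι → R} {p q : ι} (h : d p = d q) (s : R) :
    Commute (diagonal d) (single p q s) := by
  change diagonal d * single p q s = single p q s * diagonal d
  ext i j
  rw [diagonal_mul, mul_diagonal, single_apply]
  split_ifs with hij
  · rw [← hij.1, ← hij.2, h, mul_comm]
  · rw [mul_zero, zero_mul]

lemma not_forall_mul_comm_of_apply_ne_zero [Semiring R] {X : Matrix ι ι R} {i j : ι} (hij : i ≠ j)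
    (h : X i j ≠ 0) : ¬ ∀ Y, X * Y = Y * X :=
  fun hX => h (row_eq_zero_of_commute_single (i := i) (hX _).symm hij.symm)

lemma not_forall_mul_comm_of_diag_ne [Semiring R] {X : Matrix ι ι R} {i j : ι}
    (h : X i i ≠ X j j) : ¬ ∀ Y, X * Y = Y * X :=
  fun hX => h (diag_eq_of_commute_single (hX (single i j 1)).symm)

end Matrix

section commGraph

variable {R : Type*} [Semiring R] {n : ℕ}

lemma commGraph_edist_le_one
    {X Y : {X : Matrix (Fin n) (Fin n) R // ¬ ∀ Y, X * Y = Y * X}} (h : Commute X.1 Y.1) :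
    (commGraph R n).edist X Y ≤ 1 :=
  SimpleGraph.edist_le_one_iff_adj_or_eq.mpr (or_iff_not_imp_right.mpr fun hXY => ⟨hXY, h⟩)

lemma commGraph_edist_le_four
    {X₀ X₁ X₂ X₃ X₄ : {X : Matrix (Fin n) (Fin n) R // ¬ ∀ Y, X * Y = Y * X}}
    (h₀₁ : Commute X₀.1 X₁.1) (h₁₂ : Commute X₁.1 X₂.1) (h₂₃ : Commute X₂.1 X₃.1)
    (h₃₄ : Commute X₃.1 X₄.1) : (commGraph R n).edist X₀ X₄ ≤ 4 := by
  let G := commGraph R n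
  calc G.edist X₀ X₄ ≤ G.edist X₀ X₁ + G.edist X₁ X₂ + G.edist X₂ X₃ + G.edist X₃ X₄ :=
        G.edist_triangle.trans (add_le_add_left (G.edist_triangle.trans
          (add_le_add_left G.edist_triangle _)) _)
    _ ≤ 1 + 1 + 1 + 1 := by gcongr <;> exact commGraph_edist_le_one ‹_›
    _ = 4 := by norm_num

end commGraph

namespace Trop

variable {ι : Type*}

lemma add_eq_zero_iff {x y : Trop} : x + y = 0 ↔ x = 0 ∧ y = 0 := by
  simp only [← Tropical.untrop_inj_iff, Tropical.untrop_add, Tropical.untrop_zero, min_eq_top]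

lemma add_ne_zero_iff {x y : Trop} : x + y ≠ 0 ↔ x ≠ 0 ∨ y ≠ 0 := by
  rw [Ne, add_eq_zero_iff, not_and_or]

instance : NoZeroDivisors Trop where
  eq_zero_or_eq_zero_of_mul_eq_zero {x y} h := by
    simp only [← Tropical.untrop_inj_iff, Tropical.untrop_mul, Tropical.untrop_zero] at h ⊢
    exact WithBot.add_eq_bot.mp h

lemma sum_eq_zero_iff (s : Finset ι) (f : ι → Trop) :
    ∑ i ∈ s, f i = 0 ↔ ∀ i ∈ s, f i = 0 := by
  classical
  induction s using Finset.induction_on with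
  | empty => simp
  | insert a s ha ih => simp [Finset.sum_insert ha, add_eq_zero_iff, ih]

lemma add_sum_eq_sum {s : Finset ι} {i : ι} (hi : i ∈ s) (f : ι → Trop) :
    f i + ∑ j ∈ s, f j = ∑ j ∈ s, f j := by
  classical
  rw [← Finset.add_sum_erase s f hi, ← add_assoc, Tropical.add_self]

def ofReal (a : ℝ) : Trop := Tropical.trop (OrderDual.toDual (a : WithBot ℝ))

lemma ofReal_ne_zero (a : ℝ) : ofReal a ≠ 0 := by
  simp [ofReal, ← Tropical.untrop_inj_iff]

instance : Nontrivial Trop := ⟨⟨1, 0, ofReal_ne_zero 0⟩⟩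

lemma exists_eq_ofReal {x : Trop} (hx : x ≠ 0) : ∃ a, x = ofReal a := by
  obtain ⟨a, ha⟩ := WithBot.ne_bot_iff_exists.mp (fun h => hx (Tropical.untrop_injective h))
  exact ⟨a, Tropical.untrop_injective ha.symm⟩

lemma ofReal_mul_ofReal (a b : ℝ) : ofReal a * ofReal b = ofReal (a + b) := rfl

-- `Trop` is ordered by the order dual of `WithBot ℝ`, the reverse of the max-plus order.
lemma ofReal_add_ofReal_of_le {a b : ℝ} (h : b ≤ a) : ofReal a + ofReal b = ofReal a :=
  Tropical.add_eq_left (WithBot.coe_le_coe.mpr h)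

lemma exists_forall_le_add_mul_eq (x y : Trop) (h : x ≠ 0 → y ≠ 0) :
    ∃ c : ℝ, ∀ d ≤ c, y + ofReal d * x = y := by
  by_cases hx : x = 0
  · exact ⟨0, fun d _ => by rw [hx, mul_zero, add_zero]⟩
  obtain ⟨a, rfl⟩ := exists_eq_ofReal hx
  obtain ⟨b, rfl⟩ := exists_eq_ofReal (h hx)
  exact ⟨b - a, fun d hd => by
    rw [ofReal_mul_ofReal, ofReal_add_ofReal_of_le (by linarith)]⟩

lemma exists_ne_zero_forall_add_mul_eq [Finite ι] (x y : ι → Trop)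
    (h : ∀ i, x i ≠ 0 → y i ≠ 0) : ∃ s ≠ 0, ∀ i, y i + s * x i = y i := by
  choose c hc using fun i => exists_forall_le_add_mul_eq (x i) (y i) (h i)
  obtain ⟨d, hd⟩ := Finite.exists_ge c
  exact ⟨ofReal d, ofReal_ne_zero d, fun i => hc i d (hd i)⟩

variable [Fintype ι]

lemma mul_apply_ne_zero_iff (X Y : Matrix ι ι Trop) (i j : ι) :
    (X * Y) i j ≠ 0 ↔ ∃ k, X i k ≠ 0 ∧ Y k j ≠ 0 := by
  simp [Matrix.mul_apply, sum_eq_zero_iff]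

variable [DecidableEq ι]

lemma one_add_pow_apply_ne_zero_of_le (A : Matrix ι ι Trop) {m m' : ℕ} (hm : m ≤ m')
    {i j : ι} (h : ((1 + A) ^ m) i j ≠ 0) : ((1 + A) ^ m') i j ≠ 0 := by
  induction hm with
  | refl => exact h
  | step _ ih =>
    rw [pow_succ, mul_apply_ne_zero_iff]
    exact ⟨j, ih, add_ne_zero_iff.mpr (.inl (by simp))⟩

lemma exists_commute_support_transitive (A : Matrix ι ι Trop) :
    ∃ Q : Matrix ι ι Trop, Commute A Q ∧ (∀ i j, A i j ≠ 0 → Q i j ≠ 0) ∧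
      ∀ i j k, Q i j ≠ 0 → Q j k ≠ 0 → Q i k ≠ 0 := by
  let supp : ℕ →o Set (ι × ι) :=
    ⟨fun m => {ij | ((1 + A) ^ m) ij.1 ij.2 ≠ 0},
      fun _ _ hm _ => one_add_pow_apply_ne_zero_of_le A hm⟩
  obtain ⟨N, hN⟩ := WellFoundedGT.monotone_chain_condition supp
  have hstable : ∀ m ≥ N, supp m = supp N := fun m hm => (hN m hm).symm
  refine ⟨(1 + A) ^ (N + 1), ((Commute.one_right A).add_right (Commute.refl A)).pow_right _,
    fun i j h => one_add_pow_apply_ne_zero_of_le A (m := 1) (by omega) ?_,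
    fun i j k hij hjk => ?_⟩
  · rw [pow_one, Matrix.add_apply]
    exact add_ne_zero_iff.mpr (.inr h)
  have hik : ((1 + A) ^ (N + 1 + (N + 1))) i k ≠ 0 := by
    rw [pow_add, mul_apply_ne_zero_iff]
    exact ⟨j, hij, hjk⟩
  change (i, k) ∈ supp (N + 1)
  rw [hstable _ (by omega), ← hstable (N + 1 + (N + 1)) (by omega)]
  exact hik

lemma exists_commute_one_add_single (Q : Matrix ι ι Trop) {p q : ι} (hpq : Q p q ≠ 0)
    (htrans : ∀ i j k, Q i j ≠ 0 → Q j k ≠ 0 → Q i k ≠ 0) :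
    ∃ s ≠ 0, Commute (1 + Matrix.single p q s) (Q + Matrix.scalar ι Q.trace) := by
  obtain ⟨s, hs, hsQ⟩ := exists_ne_zero_forall_add_mul_eq
    (Sum.elim (Q q) (fun i => Q i p)) (Sum.elim (Q p) (fun i => Q i q))
    (Sum.rec (fun j => htrans p q j hpq) (fun i h => htrans i p q h hpq))
  have hdiag (i : ι) : (Q + Matrix.scalar ι Q.trace) i i = Q.trace := by
    rw [Matrix.add_apply, Matrix.scalar_apply, Matrix.diagonal_apply_eq]
    exact add_sum_eq_sum (Finset.mem_univ i) Q.diag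
  have hoff {i j : ι} (h : i ≠ j) : (Q + Matrix.scalar ι Q.trace) i j = Q i j := by
    rw [Matrix.add_apply, Matrix.scalar_apply, Matrix.diagonal_apply_ne _ h, add_zero]
  refine ⟨s, hs, Matrix.commute_one_add_single _ (by rw [hdiag, hdiag, mul_comm]) ?_ ?_⟩
  · intro j hj
    rw [hoff (Ne.symm hj), Matrix.add_apply, add_right_comm]
    exact congrArg (· + _) (hsQ (.inl j))
  · intro i hi
    rw [hoff hi, Matrix.add_apply, add_right_comm, mul_comm]
    exact congrArg (· + _) (hsQ (.inr i))

end Trop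

theorem dist_le_four_of_distinct_diagonal_general (n : ℕ) (hn : 3 ≤ n)
    (D A : Matrix (Fin n) (Fin n) Trop)
    (hdiag : ∀ i j : Fin n, i ≠ j → D i j = 0)
    (hD : ¬ ∀ Y, D * Y = Y * D) (hA : ¬ ∀ Y, A * Y = Y * A) :
    (commGraph Trop n).edist ⟨D, hD⟩ ⟨A, hA⟩ ≤ 4 := by
  have hDdiag : D = Matrix.diagonal D.diag := (Matrix.IsDiag.diagonal_diag hdiag).symm
  by_cases hAdiag : A.IsDiag
  · refine (commGraph_edist_le_one ?_).trans (by norm_num)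
    change Commute D A
    rw [hDdiag, ← hAdiag.diagonal_diag]
    exact Matrix.commute_diagonal _ _
  obtain ⟨p, q, hpq, hApq⟩ : ∃ p q, p ≠ q ∧ A p q ≠ 0 := by
    simpa [Matrix.IsDiag, Pairwise] using hAdiag
  obtain ⟨r, hrp, hrq⟩ := ENat.exists_ne_ne_of_three_le (by simpa using hn) p q
  obtain ⟨Q, hAQ, hQ, htrans⟩ := Trop.exists_commute_support_transitive A
  obtain ⟨s, hs, hMB⟩ := Trop.exists_commute_one_add_single Q (hQ p q hApq) htrans
  let C := Matrix.diagonal fun i => if i = p ∨ i = q then (1 : Trop) else 0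
  let M := 1 + Matrix.single p q s
  let B := Q + Matrix.scalar (Fin n) Q.trace
  have hC : ¬ ∀ Y, C * Y = Y * C :=
    Matrix.not_forall_mul_comm_of_diag_ne (i := p) (j := r) (by simp [C, hrp, hrq])
  have hM : ¬ ∀ Y, M * Y = Y * M :=
    Matrix.not_forall_mul_comm_of_apply_ne_zero hpq (by simp [M, hpq, hs])
  have hB : ¬ ∀ Y, B * Y = Y * B :=
    Matrix.not_forall_mul_comm_of_apply_ne_zero hpq (by simp [B, hpq, hQ p q hApq])
  have hDC : Commute D C := hDdiag ▸ Matrix.commute_diagonal _ _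
  have hCM : Commute C M :=
    (Commute.one_right C).add_right (Matrix.commute_diagonal_single (by simp) s)
  have hBA : Commute B A :=
    hAQ.symm.add_left (Matrix.scalar_commute _ (fun _ => Commute.all _ _) A)
  exact commGraph_edist_le_four (X₁ := ⟨C, hC⟩) (X₂ := ⟨M, hM⟩) (X₃ := ⟨B, hB⟩) hDC hCM hMB hBA

/-- For `n ≥ 3`, if `D ∈ M_n(𝕋)` is a diagonal matrix with pairwise distinct diagonal
entries and `A ∈ M_n(𝕋)` is any noncentral matrix, then the distance between `D` and `A`
in `Γ(M_n(𝕋))` is at most 4. -/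
theorem dist_le_four_of_distinct_diagonal (n : ℕ) (hn : 3 ≤ n)
    (D A : Matrix (Fin n) (Fin n) Trop)
    (hdiag : ∀ i j : Fin n, i ≠ j → D i j = 0)
    (hdist : Function.Injective fun i : Fin n => D i i)
    (hD : ¬ ∀ Y, D * Y = Y * D) (hA : ¬ ∀ Y, A * Y = Y * A) :
    (commGraph Trop n).edist ⟨D, hD⟩ ⟨A, hA⟩ ≤ 4 :=
  dist_le_four_of_distinct_diagonal_general n hn D A hdiag hD hA
end
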